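/- arXiv:2302.05816 — 3 statements merged into one kernel-verified Lean document; each statement's English description precedes it below -/
import Mathlib

section
/- Let φ(t,x,s,y) = (1/(2ε))|t-s|² + (1/(2δ))|x-y|² - β(t+s) + λ/t + λ/s on (0,T] × ℝⁿ × (0,T] × ℝⁿ, and let V, W : (0,T] × ℝⁿ → ℝ be L-Lipschitz. If Φ(t,x,s,y) = V(t,x) - W(s,y) - φ(t,x,s,y) attains its maximum at (t₀,x₀,s₀,y₀), then (1/ε)|t₀-s₀|² + (1/δ)|x₀-y₀|² ≤ 4L²(ε+δ), and in particular |(t₀,x₀) - (s₀,y₀)| ≤ 2L(ε+δ). -/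
/-!
Comparing the maximum value of `Φ` with its values at the diagonal points `(t₀,x₀,t₀,x₀)` and
`(s₀,y₀,s₀,y₀)` and adding the two inequalities, the terms `-β(t+s) + λ/t + λ/s` cancel and
only the quadratic part of the penalty survives: `|t₀-s₀|²/ε + ‖x₀-y₀‖²/δ` is bounded by the
oscillation of `V` and `W` between the two points, hence by `2Lr` with `r` the distance of
`(t₀,x₀)` and `(s₀,y₀)`. Since `r² ≤ (ε+δ)(|t₀-s₀|²/ε + ‖x₀-y₀‖²/δ)`, this gives
`r ≤ 2L(ε+δ)`, and feeding that back in gives the bound `4L²(ε+δ)`.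
-/

open Set

theorem two_mul_penalty_sub_le_of_isMaxOn {X : Type*} {S : Set X} {u v : X → ℝ}
    {ψ : X → X → ℝ} {p q : X} (hp : p ∈ S) (hq : q ∈ S)
    (hmax : IsMaxOn (fun z : X × X => u z.1 - v z.2 - ψ z.1 z.2) (S ×ˢ S) (p, q)) :
    2 * ψ p q - ψ p p - ψ q q ≤ (u p - u q) + (v p - v q) := by
  have hqq : u q - v q - ψ q q ≤ u p - v q - ψ p q := hmax (mk_mem_prod hq hq)
  have hpp : u p - v p - ψ p p ≤ u p - v q - ψ p q := hmax (mk_mem_prod hp hp)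
  linarith

theorem two_mul_penalty_sub_diag_eq {E : Type*} [SeminormedAddCommGroup E]
    {ε δ β lam : ℝ} {φ : ℝ → E → ℝ → E → ℝ}
    (hφ : ∀ t x s y, φ t x s y =
      (1 / (2 * ε)) * |t - s| ^ 2 + (1 / (2 * δ)) * ‖x - y‖ ^ 2
        - β * (t + s) + lam / t + lam / s)
    (t s : ℝ) (x y : E) :
    2 * φ t x s y - φ t x t x - φ s y s y = (1 / ε) * |t - s| ^ 2 + (1 / δ) * ‖x - y‖ ^ 2 := by
  simp only [hφ, sub_self, abs_zero, norm_zero]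
  ring

theorem add_le_mul_weighted_add {a b ε δ : ℝ} (ha : 0 ≤ a) (hb : 0 ≤ b)
    (hε : 0 < ε) (hδ : 0 < δ) :
    a + b ≤ (ε + δ) * ((1 / ε) * a + (1 / δ) * b) := by
  calc a + b ≤ a + b + (ε * ((1 / δ) * b) + δ * ((1 / ε) * a)) :=
        le_add_of_nonneg_right (by positivity)
    _ = (ε + δ) * ((1 / ε) * a + (1 / δ) * b) := by field_simp; ring

theorem weighted_add_le_and_sqrt_le_of_le_mul_sqrt {a b ε δ L : ℝ} (ha : 0 ≤ a) (hb : 0 ≤ b)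
    (hε : 0 < ε) (hδ : 0 < δ) (hL : 0 ≤ L)
    (h : (1 / ε) * a + (1 / δ) * b ≤ 2 * L * √(a + b)) :
    (1 / ε) * a + (1 / δ) * b ≤ 4 * L ^ 2 * (ε + δ) ∧ √(a + b) ≤ 2 * L * (ε + δ) := by
  set r := √(a + b)
  have hr0 : 0 ≤ r := Real.sqrt_nonneg _
  have hr_sq : r ^ 2 ≤ 2 * L * (ε + δ) * r := by
    calc r ^ 2 = a + b := Real.sq_sqrt (by positivity)
      _ ≤ (ε + δ) * ((1 / ε) * a + (1 / δ) * b) := add_le_mul_weighted_add ha hb hε hδ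
      _ ≤ (ε + δ) * (2 * L * r) := mul_le_mul_of_nonneg_left h (by positivity)
      _ = 2 * L * (ε + δ) * r := by ring
  have hr : r ≤ 2 * L * (ε + δ) := by
    by_contra! hlt
    have hc : 0 ≤ 2 * L * (ε + δ) := by positivity
    nlinarith
  refine ⟨?_, hr⟩
  calc (1 / ε) * a + (1 / δ) * b ≤ 2 * L * r := h
    _ ≤ 2 * L * (2 * L * (ε + δ)) := mul_le_mul_of_nonneg_left hr (by positivity)
    _ = 4 * L ^ 2 * (ε + δ) := by ring

theorem doubling_localization_general {n : ℕ} (T L ε δ β lam : ℝ)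
    (hL : 0 ≤ L)
    (hε : ε ∈ Set.Ioo (0 : ℝ) 1) (hδ : δ ∈ Set.Ioo (0 : ℝ) 1)
    (V W : ℝ → EuclideanSpace ℝ (Fin n) → ℝ)
    (hV : ∀ t s : ℝ, t ∈ Set.Ioc 0 T → s ∈ Set.Ioc 0 T →
      ∀ x y : EuclideanSpace ℝ (Fin n),
        |V t x - V s y| ≤ L * Real.sqrt ((t - s) ^ 2 + ‖x - y‖ ^ 2))
    (hW : ∀ t s : ℝ, t ∈ Set.Ioc 0 T → s ∈ Set.Ioc 0 T →
      ∀ x y : EuclideanSpace ℝ (Fin n),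
        |W t x - W s y| ≤ L * Real.sqrt ((t - s) ^ 2 + ‖x - y‖ ^ 2))
    (φ : ℝ → EuclideanSpace ℝ (Fin n) → ℝ → EuclideanSpace ℝ (Fin n) → ℝ)
    (hφ : ∀ t x s y, φ t x s y =
      (1 / (2 * ε)) * |t - s| ^ 2 + (1 / (2 * δ)) * ‖x - y‖ ^ 2
        - β * (t + s) + lam / t + lam / s)
    (t₀ s₀ : ℝ) (x₀ y₀ : EuclideanSpace ℝ (Fin n))
    (ht₀ : t₀ ∈ Set.Ioc 0 T) (hs₀ : s₀ ∈ Set.Ioc 0 T)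
    (hmax : ∀ t s : ℝ, t ∈ Set.Ioc 0 T → s ∈ Set.Ioc 0 T →
      ∀ x y : EuclideanSpace ℝ (Fin n),
        V t x - W s y - φ t x s y ≤ V t₀ x₀ - W s₀ y₀ - φ t₀ x₀ s₀ y₀) :
    (1 / ε) * |t₀ - s₀| ^ 2 + (1 / δ) * ‖x₀ - y₀‖ ^ 2 ≤ 4 * L ^ 2 * (ε + δ) ∧
    Real.sqrt ((t₀ - s₀) ^ 2 + ‖x₀ - y₀‖ ^ 2) ≤ 2 * L * (ε + δ) := by
  have hgap := two_mul_penalty_sub_le_of_isMaxOn (S := Ioc 0 T ×ˢ univ)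
    (u := fun p => V p.1 p.2) (v := fun p => W p.1 p.2) (ψ := fun p q => φ p.1 p.2 q.1 q.2)
    (p := (t₀, x₀)) (q := (s₀, y₀)) ⟨ht₀, trivial⟩ ⟨hs₀, trivial⟩
    (fun z hz => hmax z.1.1 z.2.1 hz.1.1 hz.2.1 z.1.2 z.2.2)
  simp only [two_mul_penalty_sub_diag_eq hφ] at hgap
  have hVosc := (le_abs_self _).trans (hV t₀ s₀ ht₀ hs₀ x₀ y₀)
  have hWosc := (le_abs_self _).trans (hW t₀ s₀ ht₀ hs₀ x₀ y₀)
  rw [sq_abs] at hgap ⊢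
  exact weighted_add_le_and_sqrt_le_of_le_mul_sqrt (sq_nonneg _) (sq_nonneg _) hε.1 hδ.1 hL
    (by linarith)

/-- Doubling-of-variables localization: if V, W are L-Lipschitz on (0,T] × ℝⁿ (w.r.t. the
Euclidean metric on (t,x)) and Φ(t,x,s,y) = V(t,x) - W(s,y) - φ(t,x,s,y) attains its
maximum at (t₀,x₀,s₀,y₀), where
φ(t,x,s,y) = |t-s|²/(2ε) + |x-y|²/(2δ) - β(t+s) + λ/t + λ/s, then
(1/ε)|t₀-s₀|² + (1/δ)|x₀-y₀|² ≤ 4L²(ε+δ) and |(t₀,x₀)-(s₀,y₀)| ≤ 2L(ε+δ). -/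
theorem doubling_localization {n : ℕ} (T L ε δ β lam : ℝ)
    (hT : 0 < T) (hL : 0 ≤ L)
    (hε : ε ∈ Set.Ioo (0 : ℝ) 1) (hδ : δ ∈ Set.Ioo (0 : ℝ) 1)
    (hβ : β ∈ Set.Ioo (0 : ℝ) 1) (hlam : lam ∈ Set.Ioo (0 : ℝ) 1)
    (V W : ℝ → EuclideanSpace ℝ (Fin n) → ℝ)
    (hV : ∀ t s : ℝ, t ∈ Set.Ioc 0 T → s ∈ Set.Ioc 0 T →
      ∀ x y : EuclideanSpace ℝ (Fin n),
        |V t x - V s y| ≤ L * Real.sqrt ((t - s) ^ 2 + ‖x - y‖ ^ 2))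
    (hW : ∀ t s : ℝ, t ∈ Set.Ioc 0 T → s ∈ Set.Ioc 0 T →
      ∀ x y : EuclideanSpace ℝ (Fin n),
        |W t x - W s y| ≤ L * Real.sqrt ((t - s) ^ 2 + ‖x - y‖ ^ 2))
    (φ : ℝ → EuclideanSpace ℝ (Fin n) → ℝ → EuclideanSpace ℝ (Fin n) → ℝ)
    (hφ : ∀ t x s y, φ t x s y =
      (1 / (2 * ε)) * |t - s| ^ 2 + (1 / (2 * δ)) * ‖x - y‖ ^ 2
        - β * (t + s) + lam / t + lam / s)
    (t₀ s₀ : ℝ) (x₀ y₀ : EuclideanSpace ℝ (Fin n))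
    (ht₀ : t₀ ∈ Set.Ioc 0 T) (hs₀ : s₀ ∈ Set.Ioc 0 T)
    (hmax : ∀ t s : ℝ, t ∈ Set.Ioc 0 T → s ∈ Set.Ioc 0 T →
      ∀ x y : EuclideanSpace ℝ (Fin n),
        V t x - W s y - φ t x s y ≤ V t₀ x₀ - W s₀ y₀ - φ t₀ x₀ s₀ y₀) :
    (1 / ε) * |t₀ - s₀| ^ 2 + (1 / δ) * ‖x₀ - y₀‖ ^ 2 ≤ 4 * L ^ 2 * (ε + δ) ∧
    Real.sqrt ((t₀ - s₀) ^ 2 + ‖x₀ - y₀‖ ^ 2) ≤ 2 * L * (ε + δ) :=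
  doubling_localization_general T L ε δ β lam hL hε hδ V W hV hW φ hφ t₀ s₀ x₀ y₀ ht₀ hs₀ hmax
end

section
/- Let A, B be symmetric n×n real matrices and let σ₁, σ₂ be n×m real matrices with |σ₁ - σ₂|_F ≤ L·d and |σ₁|_F, |σ₂|_F ≤ K. Suppose the block matrix inequality diag(A, -B) ≤ (1/δ)·[[Iₙ, -Iₙ],[-Iₙ, Iₙ]] + μ·I_{2n} holds in the Loewner order. Then (1/2)·Tr(A σ₁σ₁ᵀ - B σ₂σ₂ᵀ) ≤ (L²/(2δ))·d² + μ·K². -/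
/-!
Test the Loewner inequality against `X = [σ₁; σ₂]`. Congruence preserves positive
semidefiniteness and positive semidefinite matrices have nonnegative trace, so
`Tr(Xᵀ D X) ≤ (1/δ) Tr(Xᵀ F X) + μ Tr(Xᵀ X)` with `D = diag(A, -B)` and `F = [[I, -I], [-I, I]]`.
By block multiplication these three traces are `Tr(Aσ₁σ₁ᵀ - Bσ₂σ₂ᵀ)`, `|σ₁ - σ₂|²_F` and
`|σ₁|²_F + |σ₂|²_F`.
-/

open Matrix

noncomputable def frobNorm {n m : ℕ} (M : Matrix (Fin n) (Fin m) ℝ) : ℝ :=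
  Real.sqrt (∑ i, ∑ j, (M i j) ^ 2)

lemma frobNorm_sq {n m : ℕ} (M : Matrix (Fin n) (Fin m) ℝ) :
    frobNorm M ^ 2 = (Mᵀ * M).trace := by
  rw [frobNorm, Real.sq_sqrt (by positivity), trace, Finset.sum_comm]
  simp [mul_apply, sq]

lemma trace_transpose_mul_self_le_sq_of_frobNorm_le {n m : ℕ} {M : Matrix (Fin n) (Fin m) ℝ}
    {c : ℝ} (h : frobNorm M ≤ c) : (Mᵀ * M).trace ≤ c ^ 2 := by
  rw [← frobNorm_sq]
  exact pow_le_pow_left₀ (Real.sqrt_nonneg _) h 2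

namespace Matrix

variable {ι κ : Type*} [Fintype ι]

lemma PosSemidef.trace_conjTranspose_mul_mul_le [Fintype κ] {R : Type*} [CommRing R]
    [PartialOrder R] [StarRing R] [StarOrderedRing R] {N D : Matrix ι ι R}
    (h : (N - D).PosSemidef) (X : Matrix ι κ R) : (Xᴴ * D * X).trace ≤ (Xᴴ * N * X).trace := by
  have := (h.conjTranspose_mul_mul_same X).trace_nonneg
  rwa [Matrix.mul_sub, Matrix.sub_mul, trace_sub, sub_nonneg] at this

lemma fromRows_transpose_mul_fromBlocks_mul_fromRows {R : Type*} [Semiring R]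
    (x y : Matrix ι κ R) (P Q S T : Matrix ι ι R) :
    (fromRows x y)ᵀ * fromBlocks P Q S T * fromRows x y
      = xᵀ * P * x + xᵀ * Q * y + yᵀ * S * x + yᵀ * T * y := by
  rw [transpose_fromRows, fromCols_mul_fromBlocks, fromCols_mul_fromRows]
  simp only [Matrix.add_mul, Matrix.mul_assoc]
  abel

theorem trace_sub_le_of_posSemidef_doubling [Fintype κ] [DecidableEq ι] {c μ : ℝ}
    {A B : Matrix ι ι ℝ}
    (h : (c • fromBlocks (1 : Matrix ι ι ℝ) (-1) (-1) 1 + μ • (1 : Matrix (ι ⊕ ι) (ι ⊕ ι) ℝ)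
      - fromBlocks A 0 0 (-B)).PosSemidef) (x y : Matrix ι κ ℝ) :
    (xᵀ * A * x - yᵀ * B * y).trace
      ≤ c * ((x - y)ᵀ * (x - y)).trace + μ * ((xᵀ * x).trace + (yᵀ * y).trace) := by
  have hF : (fromRows x y)ᵀ * (fromBlocks 1 (-1) (-1) 1 : Matrix (ι ⊕ ι) (ι ⊕ ι) ℝ)
      * fromRows x y = (x - y)ᵀ * (x - y) := by
    simp only [fromRows_transpose_mul_fromBlocks_mul_fromRows, transpose_sub, Matrix.mul_one,
      Matrix.mul_neg, Matrix.neg_mul, Matrix.mul_sub, Matrix.sub_mul]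
    abel
  have hD : (fromRows x y)ᵀ * fromBlocks A 0 0 (-B) * fromRows x y
      = xᵀ * A * x - yᵀ * B * y := by
    simp only [fromRows_transpose_mul_fromBlocks_mul_fromRows, Matrix.mul_zero, Matrix.zero_mul,
      Matrix.mul_neg, Matrix.neg_mul, add_zero, sub_eq_add_neg]
  have hI : (fromRows x y)ᵀ * fromRows x y = xᵀ * x + yᵀ * y := by
    rw [transpose_fromRows, fromCols_mul_fromRows]
  have := h.trace_conjTranspose_mul_mul_le (fromRows x y)
  rwa [conjTranspose_eq_transpose_of_trivial, Matrix.mul_add, Matrix.add_mul, Matrix.mul_smul,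
    Matrix.smul_mul, Matrix.mul_smul, Matrix.smul_mul, Matrix.mul_one, hF, hD, hI, trace_add,
    trace_smul, trace_smul, trace_add, smul_eq_mul, smul_eq_mul] at this

end Matrix

theorem trace_estimate_doubling_general {n m : ℕ} (δ μ L K d : ℝ)
    (hδ : 0 < δ) (hμ : 0 < μ)
    (A B : Matrix (Fin n) (Fin n) ℝ)
    (σ₁ σ₂ : Matrix (Fin n) (Fin m) ℝ)
    (hσdiff : frobNorm (σ₁ - σ₂) ≤ L * d)
    (hσ₁ : frobNorm σ₁ ≤ K) (hσ₂ : frobNorm σ₂ ≤ K)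
    (hLoewner :
      ((1 / δ) • Matrix.fromBlocks (1 : Matrix (Fin n) (Fin n) ℝ) (-1) (-1) 1
          + μ • (1 : Matrix (Fin n ⊕ Fin n) (Fin n ⊕ Fin n) ℝ)
          - Matrix.fromBlocks A 0 0 (-B)).PosSemidef) :
    (1 / 2) * (A * σ₁ * σ₁ᵀ - B * σ₂ * σ₂ᵀ).trace
      ≤ (L ^ 2 / (2 * δ)) * d ^ 2 + μ * K ^ 2 := by
  have hcycle : (A * σ₁ * σ₁ᵀ - B * σ₂ * σ₂ᵀ).trace = (σ₁ᵀ * A * σ₁ - σ₂ᵀ * B * σ₂).trace := by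
    rw [trace_sub, trace_sub, trace_mul_cycle A, trace_mul_cycle B]
  calc (1 / 2) * (A * σ₁ * σ₁ᵀ - B * σ₂ * σ₂ᵀ).trace
      ≤ (1 / 2) * ((1 / δ) * ((σ₁ - σ₂)ᵀ * (σ₁ - σ₂)).trace
          + μ * ((σ₁ᵀ * σ₁).trace + (σ₂ᵀ * σ₂).trace)) := by
        rw [hcycle]
        gcongr
        exact trace_sub_le_of_posSemidef_doubling hLoewner σ₁ σ₂
    _ ≤ (1 / 2) * ((1 / δ) * (L * d) ^ 2 + μ * (K ^ 2 + K ^ 2)) := by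
        gcongr
        exacts [trace_transpose_mul_self_le_sq_of_frobNorm_le hσdiff,
          trace_transpose_mul_self_le_sq_of_frobNorm_le hσ₁,
          trace_transpose_mul_self_le_sq_of_frobNorm_le hσ₂]
    _ = (L ^ 2 / (2 * δ)) * d ^ 2 + μ * K ^ 2 := by
        field_simp
        ring

/-- Trace estimate from the second-order doubling condition: if
diag(A, -B) ≤ (1/δ)[[I,-I],[-I,I]] + μ I in Loewner order, |σ₁ - σ₂|_F ≤ L d and
|σ₁|_F, |σ₂|_F ≤ K, then (1/2)Tr(Aσ₁σ₁ᵀ - Bσ₂σ₂ᵀ) ≤ (L²/(2δ))d² + μK². -/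
theorem trace_estimate_doubling {n m : ℕ} (δ μ L K d : ℝ)
    (hδ : 0 < δ) (hμ : 0 < μ) (hL : 0 < L) (hK : 0 < K) (hd : 0 ≤ d)
    (A B : Matrix (Fin n) (Fin n) ℝ) (hA : A.IsSymm) (hB : B.IsSymm)
    (σ₁ σ₂ : Matrix (Fin n) (Fin m) ℝ)
    (hσdiff : frobNorm (σ₁ - σ₂) ≤ L * d)
    (hσ₁ : frobNorm σ₁ ≤ K) (hσ₂ : frobNorm σ₂ ≤ K)
    (hLoewner :
      ((1 / δ) • Matrix.fromBlocks (1 : Matrix (Fin n) (Fin n) ℝ) (-1) (-1) 1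
          + μ • (1 : Matrix (Fin n ⊕ Fin n) (Fin n ⊕ Fin n) ℝ)
          - Matrix.fromBlocks A 0 0 (-B)).PosSemidef) :
    (1 / 2) * (A * σ₁ * σ₁ᵀ - B * σ₂ * σ₂ᵀ).trace
      ≤ (L ^ 2 / (2 * δ)) * d ^ 2 + μ * K ^ 2 :=
  trace_estimate_doubling_general δ μ L K d hδ hμ A B σ₁ σ₂ hσdiff hσ₁ hσ₂ hLoewner
end

section
/- Let u ↦ g(u) := (1/4)u⁴ + (1/3)V·u³ - (1/2)u² with V > 0. Then ũ = (1/2)(-V + sqrt(V² + 4)) is a strict local minimizer of g but not a global minimizer, i.e., g(ũ) > g(u*) where u* = (1/2)(-V - sqrt(V² + 4)). -/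
/-!
At a root `a` of `u² + V u - 1` (a critical point of `g`, since `g' u = u (u² + V u - 1)`),
Taylor expansion gives `g u - g a = (u - a)² ((a² + 1)/2 + (a + V/3)(u - a) + (u - a)²/4)`,
and the second factor is positive near `a`; so both roots are strict local minimizers.
Comparing the two roots `(-V ± √(V² + 4))/2`, the difference of the values is
`V √(V² + 4) (V² + 4) / 12`, which is positive for `V > 0`.
-/

theorem exists_pos_forall_lt_of_sub_eq_sq_mul {f q : ℝ → ℝ} {a : ℝ} (hq : ContinuousAt q a)
    (hqa : 0 < q a) (hf : ∀ u, f u - f a = (u - a) ^ 2 * q u) :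
    ∃ ε > 0, ∀ u, u ≠ a → |u - a| < ε → f a < f u := by
  obtain ⟨ε, hε, hpos⟩ := Metric.eventually_nhds_iff.mp (hq.eventually (lt_mem_nhds hqa))
  refine ⟨ε, hε, fun u hne hu => ?_⟩
  have hqu : 0 < q u := hpos (by rwa [Real.dist_eq])
  have : 0 < (u - a) ^ 2 * q u := mul_pos (sq_pos_of_ne_zero (sub_ne_zero.mpr hne)) hqu
  linarith [hf u]

noncomputable def quartic (V u : ℝ) : ℝ := u ^ 4 / 4 + V * u ^ 3 / 3 - u ^ 2 / 2

theorem quartic_sub_quartic_of_sq_add_mul_eq_one {V a : ℝ} (ha : a ^ 2 + V * a = 1) (u : ℝ) :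
    quartic V u - quartic V a =
      (u - a) ^ 2 * ((a ^ 2 + 1) / 2 + (a + V / 3) * (u - a) + (u - a) ^ 2 / 4) := by
  unfold quartic
  linear_combination u * (u - a) * ha

theorem neg_add_div_two_sq_add_mul_eq_one (V s : ℝ) (hs : s ^ 2 = V ^ 2 + 4) :
    ((-V + s) / 2) ^ 2 + V * ((-V + s) / 2) = 1 := by
  linear_combination hs / 4

theorem quartic_sub_quartic_roots (V s : ℝ) (hs : s ^ 2 = V ^ 2 + 4) :
    quartic V ((-V + s) / 2) - quartic V ((-V - s) / 2) = s * V * (V ^ 2 + 4) / 12 := by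
  unfold quartic
  linear_combination (-(V * s / 24)) * hs

/-- For V > 0, ũ = (-V + √(V²+4))/2 is a strict local minimizer of
g(u) = u⁴/4 + V u³/3 - u²/2 but not a global one: g(ũ) > g(u*) with
u* = (-V - √(V²+4))/2. -/
theorem quartic_strict_local_not_global (V : ℝ) (hV : 0 < V)
    (g : ℝ → ℝ) (hg : ∀ u, g u = u ^ 4 / 4 + V * u ^ 3 / 3 - u ^ 2 / 2) :
    (∃ ε > 0, ∀ u : ℝ, u ≠ (-V + Real.sqrt (V ^ 2 + 4)) / 2 →
      |u - (-V + Real.sqrt (V ^ 2 + 4)) / 2| < ε →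
      g ((-V + Real.sqrt (V ^ 2 + 4)) / 2) < g u) ∧
    g ((-V - Real.sqrt (V ^ 2 + 4)) / 2) < g ((-V + Real.sqrt (V ^ 2 + 4)) / 2) := by
  obtain rfl : g = quartic V := funext hg
  set s := Real.sqrt (V ^ 2 + 4)
  have hs : s ^ 2 = V ^ 2 + 4 := Real.sq_sqrt (by positivity)
  constructor
  · have ha := neg_add_div_two_sq_add_mul_eq_one V s hs
    exact exists_pos_forall_lt_of_sub_eq_sq_mul (by fun_prop) (by norm_num; positivity)
      (quartic_sub_quartic_of_sq_add_mul_eq_one ha)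
  · have hgap : 0 < s * V * (V ^ 2 + 4) / 12 := by
      have : 0 < s := Real.sqrt_pos.mpr (by positivity)
      positivity
    linarith [quartic_sub_quartic_roots V s hs]
end
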